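/- arXiv:1406.5683 — 8 statements merged into one kernel-verified Lean document; each statement's English description precedes it below -/
import Mathlib

section
/- For every positive integer n and every complex 2×n matrix Ψ, with M := μ(Ψ) = ΨΨ* − ½|Ψ|² I₂, one has the identity μ(MΨ, Ψ) = ½|Ψ|² M + M² − ½ tr(M²) I₂, where μ(Φ,Ψ) := ½(ΦΨ* + ΨΦ*) − ½ Re tr(Ψ*Φ) I₂ denotes the symmetric bilinear extension of μ. (This is the identity μ(μ(Ψ)Ψ,Ψ) = ½|Ψ|²μ(Ψ) + μ(Ψ)∘μ(Ψ) − ½ tr(μ(Ψ)∘μ(Ψ)) id used in Section 5.1 of the paper, stated fibrewise.) -/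
open Matrix

/-- The fibrewise moment map `μ(Ψ) = ΨΨ* − ½|Ψ|² I₂` for a complex 2×n matrix `Ψ`,
where `|Ψ|² = Re tr(ΨΨ*)` is the squared Frobenius norm. -/
noncomputable def muMap (n : ℕ) (Ψ : Matrix (Fin 2) (Fin n) ℂ) :
    Matrix (Fin 2) (Fin 2) ℂ :=
  Ψ * Ψᴴ - ((1 / 2 : ℝ) * ((Ψ * Ψᴴ).trace).re) • (1 : Matrix (Fin 2) (Fin 2) ℂ)

/-- The symmetric bilinear extension `μ(Φ,Ψ) = ½(ΦΨ* + ΨΦ*) − ½ Re tr(Ψ*Φ) I₂`. -/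
noncomputable def muBil (n : ℕ) (Φ Ψ : Matrix (Fin 2) (Fin n) ℂ) :
    Matrix (Fin 2) (Fin 2) ℂ :=
  (1 / 2 : ℝ) • (Φ * Ψᴴ + Ψ * Φᴴ) -
    ((1 / 2 : ℝ) * ((Ψᴴ * Φ).trace).re) • (1 : Matrix (Fin 2) (Fin 2) ℂ)

lemma real_smul_eq (r : ℝ) (X : Matrix (Fin 2) (Fin 2) ℂ) : r • X = (r : ℂ) • X := by
  ext i j
  simp [Complex.real_smul]

/-- The identity `μ(μ(Ψ)Ψ, Ψ) = ½|Ψ|² μ(Ψ) + μ(Ψ)² − ½ tr(μ(Ψ)²) I₂`. -/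
theorem muBil_mu_identity (n : ℕ) (hn : 0 < n) (Ψ : Matrix (Fin 2) (Fin n) ℂ) :
    muBil n (muMap n Ψ * Ψ) Ψ =
      ((1 / 2 : ℝ) * ((Ψ * Ψᴴ).trace).re) • muMap n Ψ + muMap n Ψ * muMap n Ψ -
        ((1 / 2 : ℂ) * (muMap n Ψ * muMap n Ψ).trace) • (1 : Matrix (Fin 2) (Fin 2) ℂ) := by
  set A : Matrix (Fin 2) (Fin 2) ℂ := Ψ * Ψᴴ with hAdef
  set M : Matrix (Fin 2) (Fin 2) ℂ := muMap n Ψ with hMdef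
  set t : ℝ := (A.trace).re with htdef
  have hA : Aᴴ = A := by
    simp [hAdef, conjTranspose_mul]
  have htr : A.trace = (t : ℂ) := by
    have hs : star A.trace = A.trace := by
      rw [← Matrix.trace_conjTranspose, hA]
    exact (Complex.conj_eq_iff_re.mp hs).symm
  have hMA : M = A - ((1 / 2 * t : ℝ)) • (1 : Matrix (Fin 2) (Fin 2) ℂ) := by
    rw [hMdef]; rfl
  have hM : Mᴴ = M := by
    rw [hMA]
    simp [conjTranspose_smul, hA]
  have hAe : A = M + ((1 / 2 * t : ℝ)) • (1 : Matrix (Fin 2) (Fin 2) ℂ) := by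
    rw [hMA]; abel
  have htrM : M.trace = 0 := by
    rw [hMA, real_smul_eq]
    simp [Matrix.trace_sub, Matrix.trace_smul, htr, Matrix.trace_one]
    ring
  have hMsq : (M * A) = M * M + ((1 / 2 * t : ℝ)) • M := by
    rw [hAe, mul_add, real_smul_eq, real_smul_eq, mul_smul_comm, mul_one]
  have hAsq : (A * M) = M * M + ((1 / 2 * t : ℝ)) • M := by
    rw [hAe, add_mul, real_smul_eq, real_smul_eq, smul_mul_assoc, one_mul]
  have htrMA : (M * A).trace = (M * M).trace := by
    rw [hMsq, Matrix.trace_add, real_smul_eq, Matrix.trace_smul, htrM]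
    simp
  have hM2real : ((M * M).trace.re : ℂ) = (M * M).trace := by
    have hh : (M * M)ᴴ = M * M := by rw [conjTranspose_mul, hM]
    have hs : star (M * M).trace = (M * M).trace := by
      rw [← Matrix.trace_conjTranspose, hh]
    exact Complex.conj_eq_iff_re.mp hs
  have h1 : (M * Ψ) * Ψᴴ = M * A := Matrix.mul_assoc M Ψ Ψᴴ
  have h2 : Ψ * (M * Ψ)ᴴ = A * M := by
    rw [conjTranspose_mul, hM]
    exact (Matrix.mul_assoc Ψ Ψᴴ M).symm
  have h3 : (Ψᴴ * (M * Ψ)).trace = (M * M).trace := by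
    rw [Matrix.trace_mul_comm, h1, htrMA]
  rw [muBil, h1, h2, h3, hMsq, hAsq]
  rw [real_smul_eq ((1/2 : ℝ) * (M * M).trace.re), real_smul_eq (1/2 : ℝ),
    real_smul_eq ((1/2 : ℝ) * t)]
  push_cast
  rw [hM2real]
  module
end

section
/- Let c ≥ 0 and 0 < s ≤ r, let h : [s,r] → ℝ be a positive differentiable function and n : [s,r] → ℝ a continuous function such that |h'(t)/h(t) − (2 + 2n(t))/t| ≤ c·t for all t ∈ [s,r]. Then |log(h(r)/h(s)) − 2 log(r/s) − 2∫_s^r n(t)/t dt| ≤ c(r²−s²)/2; equivalently, h(r) = e^{O(r²−s²)} (r/s)² exp(2∫_s^r n(t)/t dt) h(s). (This is the abstract content of Proposition 4.5 of the paper.) -/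
/-!
`f t = log (h t) - 2 log t` has derivative `h'/h - 2/t`, which lies within `c t` of `2 n(t)/t`.
Comparing `f` from above and below with primitives of `2 n(t)/t ± c t` (the one-sided
fundamental theorem of calculus) bounds `f r - f s - 2 ∫ n(t)/t` by `∫ c t = c (r² - s²)/2`,
without ever integrating `h'/h` itself.
-/

open intervalIntegral Set Real

theorem abs_sub_sub_integral_le_integral_of_hasDeriv_right {f f' φ ψ : ℝ → ℝ} {a b : ℝ}
    (hab : a ≤ b) (hcont : ContinuousOn f (Icc a b))
    (hderiv : ∀ x ∈ Ioo a b, HasDerivWithinAt f (f' x) (Ioi x) x)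
    (hφ : MeasureTheory.IntegrableOn φ (Icc a b)) (hψ : MeasureTheory.IntegrableOn ψ (Icc a b))
    (hbound : ∀ x ∈ Ioo a b, |f' x - φ x| ≤ ψ x) :
    |f b - f a - ∫ x in a..b, φ x| ≤ ∫ x in a..b, ψ x := by
  have hφ' := (intervalIntegrable_iff_integrableOn_Icc_of_le hab).2 hφ
  have hψ' := (intervalIntegrable_iff_integrableOn_Icc_of_le hab).2 hψ
  have upper := sub_le_integral_of_hasDeriv_right_of_le (φ := fun x => φ x + ψ x) hab hcont
    hderiv (hφ.add hψ) fun x hx => by linarith [(abs_le.1 (hbound x hx)).2]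
  have lower := integral_le_sub_of_hasDeriv_right_of_le (φ := fun x => φ x - ψ x) hab hcont
    hderiv (hφ.sub hψ) fun x hx => by linarith [(abs_le.1 (hbound x hx)).1]
  rw [integral_add hφ' hψ'] at upper
  rw [integral_sub hφ' hψ'] at lower
  exact abs_le.2 ⟨by linarith, by linarith⟩

theorem h_integral_formula_general (c s r : ℝ) (hs : 0 < s) (hsr : s ≤ r)
    (h h' n : ℝ → ℝ)
    (hpos : ∀ t ∈ Set.Icc s r, 0 < h t)
    (hderiv : ∀ t ∈ Set.Icc s r, HasDerivAt h (h' t) t)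
    (hncont : ContinuousOn n (Set.Icc s r))
    (hineq : ∀ t ∈ Set.Icc s r, |h' t / h t - (2 + 2 * n t) / t| ≤ c * t) :
    |Real.log (h r / h s) - 2 * Real.log (r / s) - 2 * ∫ t in s..r, n t / t| ≤
      c * (r ^ 2 - s ^ 2) / 2 := by
  have ht_ne : ∀ t ∈ Icc s r, t ≠ 0 := fun t ht => (hs.trans_le ht.1).ne'
  have hlog : ∀ t ∈ Icc s r,
      HasDerivAt (fun t => log (h t) - 2 * log t) (h' t / h t - 2 / t) t := fun t ht => by
    simpa [div_eq_mul_inv] using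
      ((hderiv t ht).log (hpos t ht).ne').fun_sub ((hasDerivAt_log (ht_ne t ht)).const_mul 2)
  have key := abs_sub_sub_integral_le_integral_of_hasDeriv_right (φ := fun t => 2 * (n t / t))
    (ψ := fun t => c * t) hsr (fun t ht => (hlog t ht).continuousAt.continuousWithinAt)
    (fun t ht => (hlog t (Ioo_subset_Icc_self ht)).hasDerivWithinAt)
    (continuousOn_const.mul (hncont.div continuousOn_id ht_ne)).integrableOn_Icc
    (continuous_const.mul continuous_id).continuousOn.integrableOn_Icc
    fun t ht => by
      convert hineq t (Ioo_subset_Icc_self ht) using 2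
      field_simp [ht_ne t (Ioo_subset_Icc_self ht)]
      ring
  rw [integral_const_mul, integral_const_mul, integral_id] at key
  rw [log_div (hpos r ⟨hsr, le_rfl⟩).ne' (hpos s ⟨le_rfl, hsr⟩).ne',
    log_div (ht_ne r ⟨hsr, le_rfl⟩) (ht_ne s ⟨le_rfl, hsr⟩)]
  convert key using 2 <;> ring

/-- If `h > 0` is differentiable on `[s,r]` with `|h'(t)/h(t) − (2 + 2n(t))/t| ≤ c·t`, then
`|log(h(r)/h(s)) − 2 log(r/s) − 2∫_s^r n(t)/t dt| ≤ c(r²−s²)/2`. -/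
theorem h_integral_formula (c s r : ℝ) (hc : 0 ≤ c) (hs : 0 < s) (hsr : s ≤ r)
    (h h' n : ℝ → ℝ)
    (hpos : ∀ t ∈ Set.Icc s r, 0 < h t)
    (hderiv : ∀ t ∈ Set.Icc s r, HasDerivAt h (h' t) t)
    (hncont : ContinuousOn n (Set.Icc s r))
    (hineq : ∀ t ∈ Set.Icc s r, |h' t / h t - (2 + 2 * n t) / t| ≤ c * t) :
    |Real.log (h r / h s) - 2 * Real.log (r / s) - 2 * ∫ t in s..r, n t / t| ≤
      c * (r ^ 2 - s ^ 2) / 2 :=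
  h_integral_formula_general c s r hs hsr h h' n hpos hderiv hncont hineq
end

section
/- Let c ≥ 0 and 0 < s ≤ r, let h : [s,r] → ℝ be a positive differentiable function and n : [s,r] → [0,∞) a continuous nonnegative function such that (i) |h'(t)/h(t) − (2 + 2n(t))/t| ≤ c·t for all t ∈ [s,r], and (ii) n(t₁) ≤ e^{c(t₂²−t₁²)} n(t₂) + c(t₂²−t₁²) for all s ≤ t₁ ≤ t₂ ≤ r (almost-monotonicity). Then e^{−cr²/2} (s/r)^{2 + 2e^{cr²} n(r) + 2cr²} h(r) ≤ h(s) ≤ e^{cr²/2} (s/r)^{2 + 2e^{−cr²} n(s) − 2cr²} h(r). (This is the abstract content of Proposition 4.7 of the paper: the frequency controls the growth of h from both sides.) -/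
/-- The frequency controls the growth of `h` from both sides: if `h > 0` is differentiable
on `[s,r]` with `|h'(t)/h(t) − (2 + 2n(t))/t| ≤ c·t` for a continuous nonnegative `n`
satisfying the almost-monotonicity `n(t₁) ≤ e^{c(t₂²−t₁²)} n(t₂) + c(t₂²−t₁²)`, then
`e^{−cr²/2} (s/r)^{2 + 2e^{cr²} n(r) + 2cr²} h(r) ≤ h(s)
  ≤ e^{cr²/2} (s/r)^{2 + 2e^{−cr²} n(s) − 2cr²} h(r)`. -/
theorem frequency_controls_h (c s r : ℝ) (hc : 0 ≤ c) (hs : 0 < s) (hsr : s ≤ r)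
    (h h' n : ℝ → ℝ)
    (hpos : ∀ t ∈ Set.Icc s r, 0 < h t)
    (hderiv : ∀ t ∈ Set.Icc s r, HasDerivAt h (h' t) t)
    (hncont : ContinuousOn n (Set.Icc s r))
    (hnnonneg : ∀ t ∈ Set.Icc s r, 0 ≤ n t)
    (hineq : ∀ t ∈ Set.Icc s r, |h' t / h t - (2 + 2 * n t) / t| ≤ c * t)
    (hmono : ∀ t₁ ∈ Set.Icc s r, ∀ t₂ ∈ Set.Icc s r, t₁ ≤ t₂ →
      n t₁ ≤ Real.exp (c * (t₂ ^ 2 - t₁ ^ 2)) * n t₂ + c * (t₂ ^ 2 - t₁ ^ 2)) :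
    Real.exp (-(c * r ^ 2) / 2) *
        (s / r) ^ (2 + 2 * Real.exp (c * r ^ 2) * n r + 2 * c * r ^ 2) * h r ≤ h s ∧
      h s ≤ Real.exp (c * r ^ 2 / 2) *
        (s / r) ^ (2 + 2 * Real.exp (-(c * r ^ 2)) * n s - 2 * c * r ^ 2) * h r := by
  have hr : 0 < r := lt_of_lt_of_le hs hsr
  set A : ℝ := 2 + 2 * Real.exp (c * r ^ 2) * n r + 2 * c * r ^ 2 with hA
  set B : ℝ := 2 + 2 * Real.exp (-(c * r ^ 2)) * n s - 2 * c * r ^ 2 with hB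
  have hsmem : s ∈ Set.Icc s r := ⟨le_refl s, hsr⟩
  have hrmem : r ∈ Set.Icc s r := ⟨hsr, le_refl r⟩
  have hcr : (0:ℝ) ≤ c * r ^ 2 := by positivity
  -- pointwise bounds on n
  have hnA : ∀ t ∈ Set.Icc s r, 2 + 2 * n t ≤ A := by
    intro t ht
    have ht0 : 0 < t := lt_of_lt_of_le hs ht.1
    have h1 := hmono t ht r hrmem ht.2
    have h4 : Real.exp (c * (r ^ 2 - t ^ 2)) ≤ Real.exp (c * r ^ 2) :=
      Real.exp_le_exp.mpr (by nlinarith [sq_nonneg t])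
    have h5 := hnnonneg r hrmem
    have h6 : 0 ≤ t ^ 2 := sq_nonneg t
    nlinarith [mul_le_mul_of_nonneg_right h4 h5]
  have hnB : ∀ t ∈ Set.Icc s r, B ≤ 2 + 2 * n t := by
    intro t ht
    have ht0 : 0 < t := lt_of_lt_of_le hs ht.1
    have h1 := hmono s hsmem t ht ht.1
    have h4 : Real.exp (c * (t ^ 2 - s ^ 2)) ≤ Real.exp (c * r ^ 2) :=
      Real.exp_le_exp.mpr (by nlinarith [sq_nonneg s, pow_le_pow_left₀ ht0.le ht.2 2])
    have h5 := hnnonneg t ht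
    have h6 : n s ≤ Real.exp (c * r ^ 2) * n t + c * r ^ 2 := by
      have := mul_le_mul_of_nonneg_right h4 h5
      nlinarith [sq_nonneg s, pow_le_pow_left₀ ht0.le ht.2 2]
    have hexp : 0 < Real.exp (c * r ^ 2) := Real.exp_pos _
    have h7 : Real.exp (-(c * r ^ 2)) * (n s - c * r ^ 2) ≤ n t := by
      rw [Real.exp_neg, inv_mul_le_iff₀ hexp]
      nlinarith
    have h8 : Real.exp (-(c * r ^ 2)) ≤ 1 := Real.exp_le_one_iff.mpr (by linarith)
    nlinarith [mul_le_mul_of_nonneg_right h8 hcr]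
  -- derivative bounds
  have habs : ∀ t ∈ Set.Icc s r,
      (2 + 2 * n t) / t - c * t ≤ h' t / h t ∧ h' t / h t ≤ (2 + 2 * n t) / t + c * t := by
    intro t ht
    have := abs_le.mp (hineq t ht)
    exact ⟨by linarith [this.1], by linarith [this.2]⟩
  -- auxiliary derivative fact for g a t = log (h t) - a * log t + b * t^2
  have gderiv : ∀ (a b : ℝ), ∀ t ∈ Set.Icc s r,
      HasDerivAt (fun x => Real.log (h x) - a * Real.log x + b * x ^ 2)
        (h' t / h t - a * t⁻¹ + b * (2 * t)) t := by
    intro a b t ht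
    have ht0 : 0 < t := lt_of_lt_of_le hs ht.1
    have d1 : HasDerivAt (fun x => Real.log (h x)) (h' t / h t) t :=
      (hderiv t ht).log (hpos t ht).ne'
    have d2 : HasDerivAt (fun x => a * Real.log x) (a * t⁻¹) t :=
      (Real.hasDerivAt_log ht0.ne').const_mul a
    have d3 : HasDerivAt (fun x => b * x ^ 2) (b * (2 * t)) t := by
      have := (hasDerivAt_pow 2 t).const_mul b
      simpa using this
    exact (d1.sub d2).add d3
  have hcont : ∀ (a b : ℝ),
      ContinuousOn (fun x => Real.log (h x) - a * Real.log x + b * x ^ 2) (Set.Icc s r) :=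
    fun a b => fun t ht => ((gderiv a b t ht).continuousAt).continuousWithinAt
  have hinterior : interior (Set.Icc s r) = Set.Ioo s r := interior_Icc
  -- g1 is antitone
  have g1anti : AntitoneOn (fun x => Real.log (h x) - A * Real.log x + (-(c/2)) * x ^ 2)
      (Set.Icc s r) := by
    apply antitoneOn_of_deriv_nonpos (convex_Icc s r) (hcont A (-(c/2)))
    · intro t ht
      rw [hinterior] at ht
      exact ((gderiv A (-(c/2)) t (Set.Ioo_subset_Icc_self ht)).differentiableAt).differentiableWithinAt
    · intro t ht
      rw [hinterior] at ht
      have ht' : t ∈ Set.Icc s r := Set.Ioo_subset_Icc_self ht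
      have ht0 : 0 < t := lt_of_lt_of_le hs ht'.1
      rw [(gderiv A (-(c/2)) t ht').deriv]
      have h1 := (habs t ht').2
      have h2 := hnA t ht'
      have h3 : (2 + 2 * n t) / t ≤ A / t := by
        exact div_le_div_of_nonneg_right h2 ht0.le
      have h4 : A * t⁻¹ = A / t := by ring
      nlinarith [h1, h3]
  -- g2 is monotone
  have g2mono : MonotoneOn (fun x => Real.log (h x) - B * Real.log x + (c/2) * x ^ 2)
      (Set.Icc s r) := by
    apply monotoneOn_of_deriv_nonneg (convex_Icc s r) (hcont B (c/2))
    · intro t ht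
      rw [hinterior] at ht
      exact ((gderiv B (c/2) t (Set.Ioo_subset_Icc_self ht)).differentiableAt).differentiableWithinAt
    · intro t ht
      rw [hinterior] at ht
      have ht' : t ∈ Set.Icc s r := Set.Ioo_subset_Icc_self ht
      have ht0 : 0 < t := lt_of_lt_of_le hs ht'.1
      rw [(gderiv B (c/2) t ht').deriv]
      have h1 := (habs t ht').1
      have h2 := hnB t ht'
      have h3 : B / t ≤ (2 + 2 * n t) / t := by
        exact div_le_div_of_nonneg_right h2 ht0.le
      have h4 : B * t⁻¹ = B / t := by ring
      nlinarith [h1, h3]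
  have hhr := hpos r hrmem
  have hhs := hpos s hsmem
  have hsrpos : 0 < s / r := div_pos hs hr
  have hlogdiv : Real.log (s / r) = Real.log s - Real.log r := Real.log_div hs.ne' hr.ne'
  have hcs : (0:ℝ) ≤ c * s ^ 2 := by positivity
  constructor
  · have key := g1anti hsmem hrmem hsr
    simp only at key
    calc Real.exp (-(c * r ^ 2) / 2) * (s / r) ^ A * h r
        = Real.exp (-(c * r ^ 2) / 2 + Real.log (s / r) * A + Real.log (h r)) := by
          rw [Real.exp_add, Real.exp_add, Real.exp_log hhr, ← Real.rpow_def_of_pos hsrpos]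
      _ ≤ Real.exp (Real.log (h s)) := by
          apply Real.exp_le_exp.mpr
          rw [hlogdiv]
          nlinarith [key]
      _ = h s := Real.exp_log hhs
  · have key := g2mono hsmem hrmem hsr
    simp only at key
    calc h s = Real.exp (Real.log (h s)) := (Real.exp_log hhs).symm
      _ ≤ Real.exp (c * r ^ 2 / 2 + Real.log (s / r) * B + Real.log (h r)) := by
          apply Real.exp_le_exp.mpr
          rw [hlogdiv]
          nlinarith [key]
      _ = Real.exp (c * r ^ 2 / 2) * (s / r) ^ B * h r := by
          rw [Real.exp_add, Real.exp_add, Real.exp_log hhr, ← Real.rpow_def_of_pos hsrpos]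
end

section
/- Let c ≥ 1, r₀ ∈ (0,1], ν > 0, and let h : (0,r₀] → (0,∞) and n : (0,r₀] → [0,∞) be functions such that (i) h(t) ≤ c·t² for all t ∈ (0,r₀]; (ii) h(t) ≥ t²ν²/c for all t ∈ (0,r₀]; and (iii) h(s) ≤ e^{cr²/2} (s/r)^{2 + 2e^{−cr²} n(s) − 2cr²} h(r) for all 0 < s ≤ r ≤ r₀. Then there exists a constant C ≥ 1, depending only on c, such that for every ω ∈ (0, r₀/4] and every s with 0 < s ≤ ω·(min(1,ν)/c)^{1/ω}, one has n(s) ≤ C·ω. (This is the abstract content of Proposition 4.8 of the paper: if |Ψ|(x) = ν > 0, then the frequency n(s) is ≲ ω for all s ≲_ω min{1, ν^{1/ω}}.) -/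
/-! Put `r = 4ω` and `q = s/r < 1`. The lower bound for `h` at `s`, the growth bound from `s`
to `r` and the upper bound at `r` give `ν²/(c² e^{cr²/2}) ≤ q^a` with
`a = 2e^{-cr²} n(s) - 2cr²`. The constraint on `s` makes `q ≤ (min(1,ν)/c)^{1/ω}/4`, hence
`q^{4cω} ≤ (ν/c)² 4^{-4cω}`, which lies below the same quantity. Since `q < 1` this forces
`a ≤ 4cω`, that is `n(s) ≤ 6cω e^{cr²} ≤ 6c e^c ω`. -/

open Real

lemma div_sq_le_rpow_of_growth {c ν K s r a x y : ℝ} (hc : 0 < c) (hK : 0 < K)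
    (hs0 : 0 < s) (hr0 : 0 < r) (hlow : s ^ 2 * ν ^ 2 / c ≤ x)
    (hgrowth : x ≤ K * (s / r) ^ (2 + a) * y) (hup : y ≤ c * r ^ 2) :
    ν ^ 2 / (c ^ 2 * K) ≤ (s / r) ^ a := by
  have hsplit : (s / r) ^ (2 + a) * r ^ 2 = s ^ 2 * (s / r) ^ a := by
    rw [rpow_add (by positivity), rpow_two]; field_simp
  have hchain : s ^ 2 * (ν ^ 2 / c) ≤ s ^ 2 * (K * c * (s / r) ^ a) :=
    calc s ^ 2 * (ν ^ 2 / c) = s ^ 2 * ν ^ 2 / c := by ring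
      _ ≤ K * (s / r) ^ (2 + a) * (c * r ^ 2) :=
        hlow.trans (hgrowth.trans (by gcongr))
      _ = K * c * ((s / r) ^ (2 + a) * r ^ 2) := by ring
      _ = s ^ 2 * (K * c * (s / r) ^ a) := by rw [hsplit]; ring
  have := le_of_mul_le_mul_left hchain (by positivity)
  rw [div_le_iff₀ hc] at this
  rw [div_le_iff₀ (by positivity)]
  linarith

lemma exp_le_four_rpow {c ω : ℝ} (hc : 0 ≤ c) (hω : 0 ≤ ω) (hω4 : ω ≤ 1 / 4) :
    exp (c * (4 * ω) ^ 2 / 2) ≤ (4 : ℝ) ^ (4 * c * ω) := by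
  rw [rpow_def_of_pos (by norm_num), exp_le_exp]
  have hlog4 : 1 / 2 ≤ log 4 := by
    have := log_two_gt_d9
    rw [show (4 : ℝ) = 2 ^ 2 by norm_num, log_pow]; push_cast; linarith
  have : 0 ≤ c * ω := mul_nonneg hc hω
  nlinarith

lemma rpow_le_of_le_mul_rpow_inv {c ν ω s : ℝ} (hc : 1 ≤ c) (hν : 0 < ν) (hω : 0 < ω)
    (hω4 : ω ≤ 1 / 4) (hs : 0 < s) (hsle : s ≤ ω * (min 1 ν / c) ^ (1 / ω)) :
    (s / (4 * ω)) ^ (4 * c * ω) ≤ ν ^ 2 / (c ^ 2 * exp (c * (4 * ω) ^ 2 / 2)) := by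
  set m := min 1 ν / c
  have hm0 : 0 < m := by positivity
  have hm1 : m ≤ 1 := (div_le_one (by linarith)).2 ((min_le_left 1 ν).trans hc)
  have hmν : m ^ (2 : ℝ) ≤ ν ^ 2 / c ^ 2 := by
    rw [rpow_two, ← div_pow]; gcongr
    exact div_le_div_of_nonneg_right (min_le_right 1 ν) (by linarith)
  calc (s / (4 * ω)) ^ (4 * c * ω) ≤ (m ^ (1 / ω) / 4) ^ (4 * c * ω) := by
        gcongr ?_ ^ _
        rw [div_le_div_iff₀ (by positivity) (by norm_num)]; linarith
    _ = m ^ (4 * c) / (4 : ℝ) ^ (4 * c * ω) := by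
        rw [div_rpow (by positivity) (by norm_num), ← rpow_mul hm0.le]
        congr 2; field_simp
    _ ≤ m ^ (2 : ℝ) / exp (c * (4 * ω) ^ 2 / 2) :=
        div_le_div₀ (by positivity) (rpow_le_rpow_of_exponent_ge hm0 hm1 (by linarith))
          (by positivity) (exp_le_four_rpow (by linarith) hω.le hω4)
    _ ≤ ν ^ 2 / (c ^ 2 * exp (c * (4 * ω) ^ 2 / 2)) := by
        rw [← div_div]; gcongr

lemma le_mul_exp_of_exponent_le {c ω n : ℝ} (hc : 0 ≤ c) (hω : 0 ≤ ω) (hω4 : ω ≤ 1 / 4)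
    (hexp : 2 * exp (-(c * (4 * ω) ^ 2)) * n - 2 * c * (4 * ω) ^ 2 ≤ 4 * c * ω) :
    n ≤ 6 * c * exp c * ω := by
  have hcω : 0 ≤ c * ω := mul_nonneg hc hω
  have hdamped : exp (-(c * (4 * ω) ^ 2)) * n ≤ 6 * c * ω := by nlinarith
  have hr2 : c * (4 * ω) ^ 2 ≤ c := by
    apply mul_le_of_le_one_right hc; nlinarith
  calc n = exp (c * (4 * ω) ^ 2) * (exp (-(c * (4 * ω) ^ 2)) * n) := by
        rw [← mul_assoc, ← exp_add, add_neg_cancel, exp_zero, one_mul]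
    _ ≤ exp (c * (4 * ω) ^ 2) * (6 * c * ω) := by gcongr
    _ ≤ exp c * (6 * c * ω) := by gcongr
    _ = 6 * c * exp c * ω := by ring

/-- If `h(t) ≍ t²` (with `h(t) ≤ c t²` and `h(t) ≥ t²ν²/c`) and `h` satisfies the
frequency-growth bound `h(s) ≤ e^{cr²/2}(s/r)^{2+2e^{−cr²}n(s)−2cr²} h(r)`, then there is a
constant `C = C(c) ≥ 1` such that `n(s) ≤ C·ω` whenever `0 < s ≤ ω·(min(1,ν)/c)^{1/ω}`
and `ω ∈ (0, r₀/4]`. -/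
theorem psi_controls_frequency :
    ∀ c : ℝ, 1 ≤ c → ∃ C : ℝ, 1 ≤ C ∧
      ∀ (r₀ ν : ℝ) (h n : ℝ → ℝ),
        0 < r₀ → r₀ ≤ 1 → 0 < ν →
        (∀ t, 0 < t → t ≤ r₀ → 0 < h t) →
        (∀ t, 0 < t → t ≤ r₀ → 0 ≤ n t) →
        (∀ t, 0 < t → t ≤ r₀ → h t ≤ c * t ^ 2) →
        (∀ t, 0 < t → t ≤ r₀ → t ^ 2 * ν ^ 2 / c ≤ h t) →
        (∀ s r : ℝ, 0 < s → s ≤ r → r ≤ r₀ →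
          h s ≤ Real.exp (c * r ^ 2 / 2) *
            (s / r) ^ (2 + 2 * Real.exp (-(c * r ^ 2)) * n s - 2 * c * r ^ 2) * h r) →
        ∀ ω : ℝ, 0 < ω → ω ≤ r₀ / 4 →
          ∀ s : ℝ, 0 < s → s ≤ ω * (min 1 ν / c) ^ (1 / ω) →
            n s ≤ C * ω := by
  intro c hc
  refine ⟨6 * c * exp c, by nlinarith [add_one_le_exp c], ?_⟩
  intro r₀ ν h n _ hr₀1 hν _ _ hup hlow hgrowth ω hω hωr₀ s hs hsle
  have hω4 : ω ≤ 1 / 4 := by linarith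
  have hsω : s ≤ ω := hsle.trans (mul_le_of_le_one_right hω.le (rpow_le_one
    (by positivity) ((div_le_one (by linarith)).2 ((min_le_left 1 ν).trans hc)) (by positivity)))
  set r := 4 * ω
  have hr0 : 0 < r := by positivity
  have hq0 : 0 < s / r := by positivity
  have hq1 : s / r < 1 := (div_lt_one hr0).2 (by linarith)
  have hgrowth_sr := hgrowth s r hs (by linarith) (by linarith)
  rw [add_sub_assoc] at hgrowth_sr
  have hlower := div_sq_le_rpow_of_growth (by linarith) (exp_pos _) hs hr0
    (hlow s hs (by linarith)) hgrowth_sr (hup r hr0 (by linarith))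
  have hupper := rpow_le_of_le_mul_rpow_inv hc hν hω hω4 hs hsle
  exact le_mul_exp_of_exponent_le (by linarith) hω.le hω4
    ((rpow_le_rpow_left_iff_of_base_lt_one hq0 hq1).1 (hupper.trans hlower))
end

section
/- Let C ≥ 1, R > 0, d ≥ 0 and r > 0 with 2r + d ≤ R. Suppose h₁, h₂ : (0,R] → [0,∞) are locally integrable functions such that hᵢ(s) ≤ C (s/t)² hᵢ(t) for all 0 < s ≤ t ≤ R and i ∈ {1,2}, and such that ∫_0^{2r} h₁(t) dt ≤ ∫_0^{2r+d} h₂(t) dt. Then h₁(r) ≤ C² ((2r+d)/(3r)) h₂(2r+d); in particular h₁(r) ≲_C ((2r+d)/r) h₂(2r+d). (This is the abstract content of Proposition 4.9 of the paper on the base-point dependence of h, where h₁, h₂ are the sphere integrals of |Ψ|² around two points x, y at distance d and balls satisfy B_{2r}(x) ⊆ B_{2r+d}(y).) -/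
open MeasureTheory

/-- Base-point dependence of `h`: if `h₁, h₂ ≥ 0` satisfy the doubling-type bound
`hᵢ(s) ≤ C (s/t)² hᵢ(t)` for `0 < s ≤ t ≤ R` and `∫_0^{2r} h₁ ≤ ∫_0^{2r+d} h₂`, then
`h₁(r) ≤ C² ((2r+d)/(3r)) h₂(2r+d)`. -/
theorem h_base_point_dependence (C R d r : ℝ) (hC : 1 ≤ C) (hR : 0 < R) (hd : 0 ≤ d)
    (hr : 0 < r) (hrR : 2 * r + d ≤ R) (h₁ h₂ : ℝ → ℝ)
    (h₁nonneg : ∀ t, 0 < t → t ≤ R → 0 ≤ h₁ t)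
    (h₂nonneg : ∀ t, 0 < t → t ≤ R → 0 ≤ h₂ t)
    (h₁int : IntervalIntegrable h₁ volume 0 R)
    (h₂int : IntervalIntegrable h₂ volume 0 R)
    (h₁growth : ∀ s t : ℝ, 0 < s → s ≤ t → t ≤ R → h₁ s ≤ C * (s / t) ^ 2 * h₁ t)
    (h₂growth : ∀ s t : ℝ, 0 < s → s ≤ t → t ≤ R → h₂ s ≤ C * (s / t) ^ 2 * h₂ t)
    (hint : (∫ t in (0 : ℝ)..(2 * r), h₁ t) ≤ ∫ t in (0 : ℝ)..(2 * r + d), h₂ t) :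
    h₁ r ≤ C ^ 2 * ((2 * r + d) / (3 * r)) * h₂ (2 * r + d) := by
  set T := 2 * r + d with hTdef
  have hC0 : (0 : ℝ) < C := lt_of_lt_of_le one_pos hC
  have hT0 : 0 < T := by simp only [hTdef]; linarith
  have h2rR : 2 * r ≤ R := by linarith
  have h2rT : 2 * r ≤ T := by simp only [hTdef]; linarith
  have hTR : T ≤ R := hrR
  -- interval integrability on subintervals
  have hsub : ∀ a b : ℝ, 0 ≤ a → a ≤ R → 0 ≤ b → b ≤ R → Set.uIcc a b ⊆ Set.uIcc 0 R :=
    fun a b ha haR hb hbR => Set.uIcc_subset_uIcc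
      (by rw [Set.uIcc_of_le hR.le]; exact ⟨ha, haR⟩)
      (by rw [Set.uIcc_of_le hR.le]; exact ⟨hb, hbR⟩)
  have hint1 : IntervalIntegrable h₁ volume r (2 * r) :=
    h₁int.mono_set (hsub _ _ (by linarith) (by linarith) (by linarith) (by linarith))
  have hint1' : IntervalIntegrable h₁ volume 0 (2 * r) :=
    h₁int.mono_set (hsub _ _ le_rfl hR.le (by linarith) (by linarith))
  have hint2 : IntervalIntegrable h₂ volume 0 T :=
    h₂int.mono_set (hsub _ _ le_rfl hR.le hT0.le hTR)
  -- Lower bound: on [r, 2r], h₁ t ≥ h₁ r / C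
  have hlow : r * (h₁ r / C) ≤ ∫ t in r..(2 * r), h₁ t := by
    have hmono : ∀ t ∈ Set.Icc r (2 * r), h₁ r / C ≤ h₁ t := by
      intro t ht
      have ht0 : 0 < t := lt_of_lt_of_le hr ht.1
      have htR : t ≤ R := le_trans ht.2 h2rR
      have hg := h₁growth r t hr ht.1 htR
      have hnn := h₁nonneg t ht0 htR
      have hq : (r / t) ^ 2 ≤ 1 := by
        have : r / t ≤ 1 := (div_le_one ht0).mpr ht.1
        nlinarith [div_nonneg hr.le ht0.le]
      have hmm := mul_le_mul_of_nonneg_left hq (mul_nonneg hC0.le hnn)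
      have : h₁ r ≤ C * h₁ t := le_trans hg (by nlinarith [hmm])
      rw [div_le_iff₀ hC0]
      nlinarith [this]
    calc r * (h₁ r / C) = ∫ _ in r..(2 * r), (h₁ r / C) := by
          rw [intervalIntegral.integral_const, smul_eq_mul]; ring
      _ ≤ ∫ t in r..(2 * r), h₁ t :=
          intervalIntegral.integral_mono_on (by linarith) intervalIntegrable_const hint1 hmono
  -- ∫_r^{2r} h₁ ≤ ∫_0^{2r} h₁
  have hsplit : (∫ t in r..(2 * r), h₁ t) ≤ ∫ t in (0 : ℝ)..(2 * r), h₁ t := by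
    have hadd : (∫ t in (0 : ℝ)..r, h₁ t) + (∫ t in r..(2 * r), h₁ t)
        = ∫ t in (0 : ℝ)..(2 * r), h₁ t := by
      apply intervalIntegral.integral_add_adjacent_intervals
      · exact h₁int.mono_set (hsub _ _ le_rfl hR.le (by linarith) (by linarith))
      · exact hint1
    have hnn : (0 : ℝ) ≤ ∫ t in (0 : ℝ)..r, h₁ t := by
      apply intervalIntegral.integral_nonneg_of_ae_restrict hr.le
      rw [Measure.restrict_congr_set Ioc_ae_eq_Icc.symm]
      filter_upwards [ae_restrict_mem measurableSet_Ioc] with t ht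
      exact h₁nonneg t ht.1 (le_trans ht.2 (by linarith))
    linarith
  -- Upper bound for ∫_0^T h₂
  have hup : (∫ t in (0 : ℝ)..T, h₂ t) ≤ C * h₂ T * T / 3 := by
    have hcont : IntervalIntegrable (fun t : ℝ => (C * h₂ T / T ^ 2) * t ^ 2) volume 0 T :=
      (continuous_const.mul (continuous_pow 2)).intervalIntegrable 0 T
    have hmono : (∫ t in (0 : ℝ)..T, h₂ t)
        ≤ ∫ t in (0 : ℝ)..T, (C * h₂ T / T ^ 2) * t ^ 2 := by
      apply intervalIntegral.integral_mono_ae_restrict hT0.le hint2 hcont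
      rw [Measure.restrict_congr_set Ioc_ae_eq_Icc.symm]
      filter_upwards [ae_restrict_mem measurableSet_Ioc] with t ht
      have hg := h₂growth t T ht.1 ht.2 hTR
      calc h₂ t ≤ C * (t / T) ^ 2 * h₂ T := hg
        _ = (C * h₂ T / T ^ 2) * t ^ 2 := by field_simp
    have hcomp : (∫ t in (0 : ℝ)..T, (C * h₂ T / T ^ 2) * t ^ 2) = C * h₂ T * T / 3 := by
      rw [intervalIntegral.integral_const_mul, integral_pow]
      field_simp
      ring
    linarith [hmono, hcomp.le, hcomp.ge]
  -- combine
  have hkey : r * (h₁ r / C) ≤ C * h₂ T * T / 3 := by linarith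
  have h2 := mul_le_mul_of_nonneg_left hkey (div_nonneg hC0.le hr.le)
  have e1 : (C / r) * (r * (h₁ r / C)) = h₁ r := by field_simp
  have e2 : (C / r) * (C * h₂ T * T / 3) = C ^ 2 * (T / (3 * r)) * h₂ T := by
    field_simp
  linarith [h2, e1.ge, e1.le, e2.ge, e2.le]
end

section
/- Let (X, dist) be a metric space and ρ : X → ℝ a function for which there is a δ > 0 with ρ(y) ≥ δ for all y ∈ X. Then for every x ∈ X there exists x' ∈ X such that dist(x, x') ≤ 2ρ(x), ρ(x') ≤ ρ(x), and ρ(x') ≤ 2ρ(y) for every y ∈ X with dist(x', y) ≤ ρ(x'). (This is the point-selection argument in Step 1 of the proof of Proposition 5.2 of the paper, applied there to the critical radius function ρ.) -/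
lemma point_selection_aux {X : Type*} [MetricSpace X] (ρ : X → ℝ) (δ : ℝ) (hδ : 0 < δ)
    (hρ : ∀ y : X, δ ≤ ρ y) : ∀ n : ℕ, ∀ x : X, ρ x ≤ 2 ^ n * δ →
    ∃ x' : X, dist x x' ≤ 2 * ρ x ∧ ρ x' ≤ ρ x ∧
      ∀ y : X, dist x' y ≤ ρ x' → ρ x' ≤ 2 * ρ y := by
  intro n
  induction n with
  | zero =>
    intro x hx
    refine ⟨x, ?_, le_refl _, ?_⟩
    · rw [dist_self]
      nlinarith [hρ x, hδ]
    · intro y _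
      have := hρ y
      simp at hx
      linarith
  | succ n ih =>
    intro x hx
    by_cases h : ∀ y : X, dist x y ≤ ρ x → ρ x ≤ 2 * ρ y
    · exact ⟨x, by rw [dist_self]; nlinarith [hρ x, hδ], le_refl _, h⟩
    · push_neg at h
      obtain ⟨y, hxy, hy⟩ := h
      have hy2 : ρ y ≤ 2 ^ n * δ := by
        rw [pow_succ] at hx; linarith
      obtain ⟨x', h1, h2, h3⟩ := ih y hy2
      refine ⟨x', ?_, by linarith [hρ y, hδ], h3⟩
      calc dist x x' ≤ dist x y + dist y x' := dist_triangle _ _ _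
        _ ≤ ρ x + 2 * ρ y := add_le_add hxy h1
        _ ≤ 2 * ρ x := by linarith

/-- Point selection: if `ρ : X → ℝ` is bounded below by `δ > 0` on a metric space `X`,
then for every `x` there is `x'` with `dist x x' ≤ 2ρ(x)`, `ρ(x') ≤ ρ(x)`, and
`ρ(x') ≤ 2ρ(y)` for all `y` in the ball of radius `ρ(x')` about `x'`. -/
theorem point_selection {X : Type*} [MetricSpace X] (ρ : X → ℝ) (δ : ℝ) (hδ : 0 < δ)
    (hρ : ∀ y : X, δ ≤ ρ y) (x : X) :
    ∃ x' : X, dist x x' ≤ 2 * ρ x ∧ ρ x' ≤ ρ x ∧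
      ∀ y : X, dist x' y ≤ ρ x' → ρ x' ≤ 2 * ρ y := by
  obtain ⟨n, hn⟩ := pow_unbounded_of_one_lt (ρ x / δ) (one_lt_two (α := ℝ))
  refine point_selection_aux ρ δ hδ hρ n x ?_
  rw [div_lt_iff₀ hδ] at hn
  linarith
end

section
/- Let (X, dist) be a metric space, let ω ∈ (0,1] and C ≥ 1, and let u : X → ℝ and ρ : X → (0,∞) be functions such that: (i) 0 ≤ u(x) ≤ C for all x; (ii) ρ(x) ≥ C⁻¹ min{1, u(x)^{1/ω}} for all x; and (iii) |u(x) − u(y)| ≤ C dist(x,y)^{1/2} ρ(x)^{−1/2} for all x, y with dist(x,y)^{1/2} ≤ ρ(x)/2. Then there is a constant C', depending only on C and ω, such that |u(x) − u(y)| ≤ C' dist(x,y)^γ for all x, y ∈ X, where γ := min{1/4, ω/2}. (This is the abstract case analysis proving Proposition 6.2 of the paper, the uniform Hölder bound [|Ψ|]_{C^{0,γ}} = O(1), where ρ is the critical radius and the two hypotheses come from Proposition 5.1 and the W^{2,2}-bound of Proposition 3.2.) -/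
/-- Abstract Hölder bound: if `0 ≤ u ≤ C`, `ρ(x) ≥ C⁻¹ min{1, u(x)^{1/ω}}`, and
`|u(x) − u(y)| ≤ C dist(x,y)^{1/2} ρ(x)^{−1/2}` whenever `dist(x,y)^{1/2} ≤ ρ(x)/2`,
then `u` is `γ`-Hölder with `γ = min{1/4, ω/2}` and a constant depending only on
`C` and `ω`. -/
theorem abstract_holder_bound (C ω : ℝ) (hC : 1 ≤ C) (hω0 : 0 < ω) (hω1 : ω ≤ 1) :
    ∃ C' : ℝ, ∀ (X : Type) [MetricSpace X], ∀ u ρ : X → ℝ,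
      (∀ x : X, 0 < ρ x) →
      (∀ x : X, 0 ≤ u x ∧ u x ≤ C) →
      (∀ x : X, C⁻¹ * min 1 (u x ^ (1 / ω)) ≤ ρ x) →
      (∀ x y : X, dist x y ^ (1 / 2 : ℝ) ≤ ρ x / 2 →
        |u x - u y| ≤ C * dist x y ^ (1 / 2 : ℝ) * ρ x ^ (-(1 / 2) : ℝ)) →
      ∀ x y : X, |u x - u y| ≤ C' * dist x y ^ min (1 / 4 : ℝ) (ω / 2) := by
  have hC0 : (0:ℝ) < C := lt_of_lt_of_le one_pos hC
  set γ : ℝ := min (1/4 : ℝ) (ω/2) with hγdef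
  have hγpos : 0 < γ := lt_min (by norm_num) (by positivity)
  have hγ14 : γ ≤ 1/4 := min_le_left _ _
  have hγω : γ ≤ ω/2 := min_le_right _ _
  refine ⟨2 * C ^ 2, ?_⟩
  intro X _ u ρ hρ hu hρl hiii x y
  have key : ∀ a b : X, u a - u b ≤ 2 * C ^ 2 * dist a b ^ γ := by
    intro a b
    set d := dist a b with hd
    have hd0 : (0:ℝ) ≤ d := dist_nonneg
    rcases eq_or_lt_of_le hd0 with h0 | hdpos
    · -- d = 0
      have hz : d ^ ((1:ℝ)/2) = 0 := by
        rw [← h0]; exact Real.zero_rpow (by norm_num)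
      have hle := hiii a b (by rw [← hd, hz]; linarith [hρ a])
      rw [← hd, hz] at hle
      have : |u a - u b| ≤ 0 := by simpa using hle
      have hz2 : d ^ γ = 0 := by rw [← h0]; exact Real.zero_rpow hγpos.ne'
      rw [hz2, mul_zero]
      exact le_trans (le_abs_self _) this
    · -- d > 0
      rcases le_or_gt d (((2*C)^2)⁻¹) with hsmall | hbig
      · -- small distance
        have hd1 : d ≤ 1 := by
          refine hsmall.trans ?_
          rw [inv_le_one_iff₀]
          right; nlinarith
        have hdγ0 : 0 ≤ d ^ γ := Real.rpow_nonneg hd0 _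
        rcases le_or_gt (d ^ ((1:ℝ)/2)) (ρ a / 2) with hA | hB
        · -- case A: can use hypothesis (iii)
          have hle := hiii a b (by rw [← hd]; exact hA)
          rw [← hd] at hle
          rcases le_or_gt (d ^ (ω/2)) (u a) with hA1 | hA2
          · -- u a not too small: ρ a ≥ C⁻¹ d^{1/2}
            have h1 : d ^ ((1:ℝ)/2) ≤ u a ^ (1/ω) := by
              have h := Real.rpow_le_rpow (Real.rpow_nonneg hd0 _) hA1
                (le_of_lt (by positivity : (0:ℝ) < 1/ω))
              have hexp : ω/2 * (1/ω) = 1/2 := by field_simp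
              rwa [← Real.rpow_mul hd0, hexp] at h
            have h2 : d ^ ((1:ℝ)/2) ≤ min 1 (u a ^ (1/ω)) :=
              le_min (Real.rpow_le_one hd0 hd1 (by norm_num)) h1
            have h3 : C⁻¹ * d ^ ((1:ℝ)/2) ≤ ρ a :=
              le_trans (by gcongr) (hρl a)
            have hρinv : ρ a ^ (-(1/2):ℝ) ≤ C ^ ((1:ℝ)/2) * d ^ (-(1/4):ℝ) := by
              have hpos : 0 < C⁻¹ * d ^ ((1:ℝ)/2) := by positivity
              calc ρ a ^ (-(1/2):ℝ) ≤ (C⁻¹ * d ^ ((1:ℝ)/2)) ^ (-(1/2):ℝ) :=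
                    Real.rpow_le_rpow_of_nonpos hpos h3 (by norm_num)
                _ = C ^ ((1:ℝ)/2) * d ^ (-(1/4):ℝ) := by
                    rw [Real.mul_rpow (by positivity) (by positivity),
                      ← Real.rpow_neg_one C, ← Real.rpow_mul hC0.le,
                      ← Real.rpow_mul hd0]
                    norm_num
            calc u a - u b ≤ |u a - u b| := le_abs_self _
              _ ≤ C * d ^ ((1:ℝ)/2) * ρ a ^ (-(1/2):ℝ) := hle
              _ ≤ C * d ^ ((1:ℝ)/2) * (C ^ ((1:ℝ)/2) * d ^ (-(1/4):ℝ)) := by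
                  gcongr
              _ = (C ^ (1:ℝ) * C ^ ((1:ℝ)/2)) * (d ^ ((1:ℝ)/2) * d ^ (-(1/4):ℝ)) := by
                  rw [Real.rpow_one]; ring
              _ = C ^ ((3:ℝ)/2) * d ^ ((1:ℝ)/4) := by
                  rw [← Real.rpow_add hC0, ← Real.rpow_add hdpos]; norm_num
              _ ≤ 2 * C ^ 2 * d ^ γ := by
                  have hc : C ^ ((3:ℝ)/2) ≤ 2 * C ^ 2 := by
                    calc C ^ ((3:ℝ)/2) ≤ C ^ (2:ℝ) :=
                          Real.rpow_le_rpow_of_exponent_le hC (by norm_num)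
                      _ = C ^ (2:ℕ) := by rw [← Real.rpow_natCast]; norm_num
                      _ ≤ 2 * C ^ 2 := by nlinarith
                  have hdd : d ^ ((1:ℝ)/4) ≤ d ^ γ :=
                    Real.rpow_le_rpow_of_exponent_ge hdpos hd1 hγ14
                  exact mul_le_mul hc hdd (by positivity) (by positivity)
          · -- u a small
            have : u a - u b ≤ d ^ γ := by
              have h1 : u a ≤ d ^ γ := by
                refine (le_of_lt hA2).trans ?_
                exact Real.rpow_le_rpow_of_exponent_ge hdpos hd1 hγω
              have h2 : 0 ≤ u b := (hu b).1
              linarith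
            refine this.trans ?_
            calc d ^ γ = 1 * d ^ γ := (one_mul _).symm
              _ ≤ 2 * C ^ 2 * d ^ γ := by
                  have h1C : (1:ℝ) ≤ 2 * C ^ 2 := by nlinarith
                  gcongr
        · -- case B: ρ a small so u a small
          have h1 : min 1 (u a ^ (1/ω)) < 2 * C * d ^ ((1:ℝ)/2) := by
            have := hρl a
            calc min 1 (u a ^ (1/ω)) = C * (C⁻¹ * min 1 (u a ^ (1/ω))) := by
                  field_simp
              _ ≤ C * ρ a := by gcongr
              _ < C * (2 * d ^ ((1:ℝ)/2)) := by gcongr; linarith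
              _ = 2 * C * d ^ ((1:ℝ)/2) := by ring
          have hdhalf : 2 * C * d ^ ((1:ℝ)/2) ≤ 1 := by
            have h2 : d ^ ((1:ℝ)/2) ≤ (((2*C)^2)⁻¹ : ℝ) ^ ((1:ℝ)/2) :=
              Real.rpow_le_rpow hd0 hsmall (by norm_num)
            have h3 : ((((2*C)^2)⁻¹ : ℝ)) ^ ((1:ℝ)/2) = (2*C)⁻¹ := by
              rw [← Real.rpow_neg_one (2*C), ← Real.rpow_natCast (2*C) 2,
                ← Real.rpow_neg (by positivity), ← Real.rpow_mul (by positivity)]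
              norm_num
            calc 2 * C * d ^ ((1:ℝ)/2) ≤ 2 * C * (2*C)⁻¹ := by
                  rw [h3] at h2; gcongr
              _ = 1 := by field_simp
          have h4 : u a ^ (1/ω) < 2 * C * d ^ ((1:ℝ)/2) := by
            rcases min_lt_iff.mp h1 with h | h
            · linarith
            · exact h
          have h5 : u a ≤ 2 * C * d ^ (ω/2) := by
            have hb0 : 0 ≤ u a ^ (1/ω) := Real.rpow_nonneg (hu a).1 _
            have := Real.rpow_le_rpow hb0 h4.le hω0.le
            rw [one_div, Real.rpow_inv_rpow (hu a).1 hω0.ne'] at this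
            refine this.trans ?_
            rw [Real.mul_rpow (by positivity) (Real.rpow_nonneg hd0 _),
              ← Real.rpow_mul hd0]
            have h6 : (2*C) ^ ω ≤ 2*C := by
              calc (2*C) ^ ω ≤ (2*C) ^ (1:ℝ) :=
                    Real.rpow_le_rpow_of_exponent_le (by linarith) hω1
                _ = 2*C := Real.rpow_one _
            have h7 : (1:ℝ)/2 * ω = ω/2 := by ring
            rw [h7]
            gcongr
          have h8 : d ^ (ω/2) ≤ d ^ γ :=
            Real.rpow_le_rpow_of_exponent_ge hdpos hd1 hγω
          have h9 : 0 ≤ u b := (hu b).1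
          have h10 : 2 * C * d ^ (ω/2) ≤ 2 * C ^ 2 * d ^ γ := by
            calc 2 * C * d ^ (ω/2) ≤ 2 * C * d ^ γ := by gcongr
              _ ≤ 2 * C ^ 2 * d ^ γ := by
                  have hcc : 2 * C ≤ 2 * C ^ 2 := by nlinarith
                  exact mul_le_mul_of_nonneg_right hcc hdγ0
          linarith
      · -- big distance
        have h1 : (((2*C)^2)⁻¹ : ℝ) ^ γ ≤ d ^ γ :=
          Real.rpow_le_rpow (by positivity) hbig.le hγpos.le
        have h2 : ((((2*C)^2)⁻¹ : ℝ)) ^ ((1:ℝ)/2) ≤ (((2*C)^2)⁻¹ : ℝ) ^ γ := by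
          refine Real.rpow_le_rpow_of_exponent_ge (by positivity) ?_ (by linarith)
          rw [inv_le_one_iff₀]; right; nlinarith
        have h3 : ((((2*C)^2)⁻¹ : ℝ)) ^ ((1:ℝ)/2) = (2*C)⁻¹ := by
          rw [← Real.rpow_neg_one (2*C), ← Real.rpow_natCast (2*C) 2,
            ← Real.rpow_neg (by positivity), ← Real.rpow_mul (by positivity)]
          norm_num
        have h4 : (2*C)⁻¹ ≤ d ^ γ := by rw [← h3]; exact h2.trans h1
        have h5 : u a - u b ≤ C := by
          have := (hu a).2; have := (hu b).1; linarith
        calc u a - u b ≤ C := h5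
          _ = 2 * C^2 * (2*C)⁻¹ := by field_simp
          _ ≤ 2 * C^2 * d ^ γ := by gcongr
    
  rw [abs_sub_le_iff]
  constructor
  · exact key x y
  · rw [dist_comm x y]; exact key y x
end

section
/- Let n be a positive integer and let A and B be nonzero complex 2×n matrices satisfying the zero-moment-map condition AA* = ½|A|² I₂ and BB* = ½|B|² I₂. Then there exist a real number t > 0 and a unitary n×n matrix U such that B = t · (A U). In other words, the group ℝ₊ × U(n) acts transitively on the nonzero part of μ⁻¹(0) ⊂ Hom(ℂⁿ, ℂ²). (This is the transitivity claim used in the Appendix of the paper to show that the canonical connection on μ⁻¹(0) → M̊_{1,n} is flat.) -/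
open Matrix
open scoped ComplexOrder

/-! After rescaling by positive reals, `AA* = BB* = 1`, i.e. the columns of `A*` and of `B*` are
orthonormal families in `ℂⁿ`. Extending both to orthonormal bases, with the given vectors in the
same positions, gives unitaries `W_A`, `W_B` with `A = E W_A*` and `B = E W_B*` for one coordinate
projection `E`, so `U = W_A W_B*` carries `A` to `B`. -/

namespace Matrix

variable {𝕜 m n : Type*} [RCLike 𝕜] [Fintype n] [DecidableEq m]

theorem orthonormal_toLp_transpose_iff (X : Matrix n m 𝕜) :
    Orthonormal 𝕜 (fun j ↦ WithLp.toLp 2 (Xᵀ j) : m → EuclideanSpace 𝕜 n) ↔ Xᴴ * X = 1 := by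
  rw [← gram_eq_one_iff_orthonormal, gram_eq_conjTranspose_mul (EuclideanSpace.basisFun n 𝕜)]
  rfl

theorem card_le_card_of_conjTranspose_mul_self_eq_one [Fintype m] {X : Matrix n m 𝕜}
    (hX : Xᴴ * X = 1) : Fintype.card m ≤ Fintype.card n := by
  simpa using ((orthonormal_toLp_transpose_iff X).2 hX).linearIndependent.fintype_card_le_finrank

theorem exists_mem_unitaryGroup_submatrix_eq [DecidableEq n] {X : Matrix n m 𝕜}
    (hX : Xᴴ * X = 1) (e : m ↪ n) : ∃ W ∈ unitaryGroup n 𝕜, W.submatrix id e = X := by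
  have hcols := (orthonormal_toLp_transpose_iff X).2 hX
  set v : n → EuclideanSpace 𝕜 n := Function.extend e (fun j ↦ WithLp.toLp 2 (Xᵀ j)) 0
  have hv : ∀ j, v (e j) = WithLp.toLp 2 (Xᵀ j) := e.injective.extend_apply _ _
  have horth : Orthonormal 𝕜 ((Set.range e).domRestrict v) := by
    convert hcols.comp _ (Equiv.ofInjective e e.injective).symm.injective
    ext ⟨_, j, rfl⟩ : 1
    simp [hv]
  obtain ⟨b, hb⟩ := horth.exists_orthonormalBasis_extension_of_card_eq (by simp)
  refine ⟨(EuclideanSpace.basisFun n 𝕜).toBasis.toMatrix b,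
    (EuclideanSpace.basisFun n 𝕜).toMatrix_orthonormalBasis_mem_unitary b, ?_⟩
  ext i j
  simp [Module.Basis.toMatrix_apply, hb (e j) ⟨j, rfl⟩, hv]

theorem exists_mem_unitaryGroup_eq_mul_of_conjTranspose_mul_self_eq_one [Fintype m]
    [DecidableEq n] {X Y : Matrix n m 𝕜} (hX : Xᴴ * X = 1) (hY : Yᴴ * Y = 1) :
    ∃ V ∈ unitaryGroup n 𝕜, Y = V * X := by
  obtain ⟨e⟩ := Function.Embedding.nonempty_of_card_le
    (card_le_card_of_conjTranspose_mul_self_eq_one hX)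
  obtain ⟨WX, hWX, rfl⟩ := exists_mem_unitaryGroup_submatrix_eq hX e
  obtain ⟨WY, hWY, rfl⟩ := exists_mem_unitaryGroup_submatrix_eq hY e
  refine ⟨WY * star WX, mul_mem hWY (Unitary.star_mem hWX), ?_⟩
  change WY.submatrix id e = (WY * star WX * WX).submatrix id e
  rw [mul_assoc, Unitary.star_mul_self_of_mem hWX, mul_one]

theorem exists_mem_unitaryGroup_eq_mul_of_mul_conjTranspose_self_eq_one [Fintype m]
    [DecidableEq n] {P Q : Matrix m n 𝕜} (hP : P * Pᴴ = 1) (hQ : Q * Qᴴ = 1) :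
    ∃ U ∈ unitaryGroup n 𝕜, Q = P * U := by
  obtain ⟨V, hV, h⟩ := exists_mem_unitaryGroup_eq_mul_of_conjTranspose_mul_self_eq_one
    (X := Pᴴ) (Y := Qᴴ) (by simpa using hP) (by simpa using hQ)
  refine ⟨star V, Unitary.star_mem hV, ?_⟩
  rw [← conjTranspose_conjTranspose Q, h, conjTranspose_mul, conjTranspose_conjTranspose,
    star_eq_conjTranspose]

variable [Fintype m]

theorem pos_of_mul_conjTranspose_self_eq_smul_one {A : Matrix m n 𝕜} {c : ℝ} (hA : A ≠ 0)
    (h : A * Aᴴ = c • 1) : 0 < c := by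
  obtain ⟨i, -, -⟩ : ∃ i j, A i j ≠ 0 := by simpa [← Matrix.ext_iff] using hA
  have hc0 : c ≠ 0 := by
    rintro rfl
    exact hA (self_mul_conjTranspose_eq_zero.1 (by simpa using h))
  have hdiag : 0 ≤ (A * Aᴴ) i i := (posSemidef_self_mul_conjTranspose A).diag_nonneg
  rw [h] at hdiag
  have hc : 0 ≤ c := by simpa [RCLike.real_smul_eq_coe_mul] using hdiag
  exact hc.lt_of_ne' hc0

theorem exists_pos_smul_mul_conjTranspose_eq_one {A : Matrix m n 𝕜} {c : ℝ} (hA : A ≠ 0)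
    (h : A * Aᴴ = c • 1) : ∃ s : ℝ, 0 < s ∧ (s • A) * (s • A)ᴴ = 1 := by
  have hc := pos_of_mul_conjTranspose_self_eq_smul_one hA h
  refine ⟨(√c)⁻¹, by positivity, ?_⟩
  rw [conjTranspose_smul, star_trivial, Matrix.smul_mul, Matrix.mul_smul, h, smul_smul,
    smul_smul, ← mul_inv, Real.mul_self_sqrt hc.le, inv_mul_cancel₀ hc.ne', one_smul]

theorem exists_eq_smul_mul_unitary_of_mul_conjTranspose_self_eq_smul_one [DecidableEq n]
    {A B : Matrix m n 𝕜} {a b : ℝ} (hA : A ≠ 0) (hB : B ≠ 0) (hA0 : A * Aᴴ = a • 1)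
    (hB0 : B * Bᴴ = b • 1) :
    ∃ t : ℝ, 0 < t ∧ ∃ U : Matrix n n 𝕜, U ∈ unitaryGroup n 𝕜 ∧ B = t • (A * U) := by
  obtain ⟨s, hs, hP⟩ := exists_pos_smul_mul_conjTranspose_eq_one hA hA0
  obtain ⟨r, hr, hQ⟩ := exists_pos_smul_mul_conjTranspose_eq_one hB hB0
  obtain ⟨U, hU, hQP⟩ := exists_mem_unitaryGroup_eq_mul_of_mul_conjTranspose_self_eq_one hP hQ
  refine ⟨r⁻¹ * s, by positivity, U, hU, ?_⟩
  rw [mul_smul, ← Matrix.smul_mul, ← hQP, inv_smul_smul₀ hr.ne']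

end Matrix

theorem transitive_on_mu_zero_general (n : ℕ) (A B : Matrix (Fin 2) (Fin n) ℂ)
    (hA : A ≠ 0) (hB : B ≠ 0)
    (hA0 : A * Aᴴ =
      ((1 / 2 : ℝ) * ((A * Aᴴ).trace).re) • (1 : Matrix (Fin 2) (Fin 2) ℂ))
    (hB0 : B * Bᴴ =
      ((1 / 2 : ℝ) * ((B * Bᴴ).trace).re) • (1 : Matrix (Fin 2) (Fin 2) ℂ)) :
    ∃ t : ℝ, 0 < t ∧ ∃ U : Matrix (Fin n) (Fin n) ℂ,
      U ∈ Matrix.unitaryGroup (Fin n) ℂ ∧ B = t • (A * U) :=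
  exists_eq_smul_mul_unitary_of_mul_conjTranspose_self_eq_smul_one hA hB hA0 hB0

/-- Transitivity of `ℝ₊ × U(n)` on the nonzero part of `μ⁻¹(0)`: if `A, B` are nonzero
complex 2×n matrices with `AA* = ½|A|² I₂` and `BB* = ½|B|² I₂`, then `B = t · (A U)`
for some `t > 0` and some unitary `U ∈ U(n)`. -/
theorem transitive_on_mu_zero (n : ℕ) (hn : 0 < n) (A B : Matrix (Fin 2) (Fin n) ℂ)
    (hA : A ≠ 0) (hB : B ≠ 0)
    (hA0 : A * Aᴴ =
      ((1 / 2 : ℝ) * ((A * Aᴴ).trace).re) • (1 : Matrix (Fin 2) (Fin 2) ℂ))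
    (hB0 : B * Bᴴ =
      ((1 / 2 : ℝ) * ((B * Bᴴ).trace).re) • (1 : Matrix (Fin 2) (Fin 2) ℂ)) :
    ∃ t : ℝ, 0 < t ∧ ∃ U : Matrix (Fin n) (Fin n) ℂ,
      U ∈ Matrix.unitaryGroup (Fin n) ℂ ∧ B = t • (A * U) :=
  transitive_on_mu_zero_general n A B hA hB hA0 hB0
end
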